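/- If z lies in the basin of attraction of infinity for f_c(z) = z^2 + c, then the limit lim_{n→∞} (1/2^n) · log⁺|f_c^n(z)| exists and is positive (this limit is the value of the Green's function of the filled Julia set at z). -/

import Mathlib

open Filter Topology Set

/-!
Outside the disc of radius `‖c‖ + 3` the map `f w = w ^ 2 + c` satisfies
`‖w‖ ^ 2 / 2 ≤ ‖f w‖ ≤ 2 * ‖w‖ ^ 2` and maps that region into itself. Along the orbit of a point
there, `uₙ = log ‖fⁿ w‖` therefore satisfies `|uₙ₊₁ - 2 uₙ| ≤ log 2`, so `uₙ / 2ⁿ` has increments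
bounded by `log 2 / 2ⁿ⁺¹`: it converges, to a limit within `log 2` of `log ‖w‖ > log 2`.
An escaping orbit eventually enters this region, and shifting the orbit by `N` steps divides the
limit by `2 ^ N`.
-/

theorem exists_tendsto_div_two_pow_of_abs_sub_two_mul_le {u : ℕ → ℝ} {C : ℝ}
    (h : ∀ n, |u (n + 1) - 2 * u n| ≤ C) :
    ∃ G, Tendsto (fun n => u n / 2 ^ n) atTop (𝓝 G) ∧ |u 0 - G| ≤ C := by
  have hstep : ∀ n, dist (u n / 2 ^ n) (u (n + 1) / 2 ^ (n + 1)) ≤ C / 2 / 2 ^ n := by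
    intro n
    have hdiff : u n / 2 ^ n - u (n + 1) / 2 ^ (n + 1) = -(u (n + 1) - 2 * u n) / 2 / 2 ^ n := by
      field_simp
      ring
    rw [Real.dist_eq, hdiff, abs_div, abs_div, abs_neg, abs_pow, abs_two]
    gcongr ?_ / 2 / _
    exact h n
  obtain ⟨G, hG⟩ := cauchySeq_tendsto_of_complete (cauchySeq_of_le_geometric_two hstep)
  refine ⟨G, hG, ?_⟩
  simpa [Real.dist_eq] using dist_le_of_le_geometric_two_of_tendsto₀ hstep hG

theorem tendsto_div_two_pow_of_tendsto_shift {u : ℕ → ℝ} {G : ℝ} (N : ℕ)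
    (h : Tendsto (fun n => u (n + N) / 2 ^ n) atTop (𝓝 G)) :
    Tendsto (fun n => u n / 2 ^ n) atTop (𝓝 (G / 2 ^ N)) := by
  rw [← tendsto_add_atTop_iff_nat N]
  refine (h.div_const (2 ^ N)).congr fun n => ?_
  rw [pow_add, div_div]

theorem Real.abs_log_le_log_two {x : ℝ} (h₁ : 1 / 2 ≤ x) (h₂ : x ≤ 2) :
    |Real.log x| ≤ Real.log 2 := by
  have hlow : Real.log (1 / 2) ≤ Real.log x := Real.log_le_log (by norm_num) h₁
  rw [one_div, Real.log_inv] at hlow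
  exact abs_le.mpr ⟨hlow, Real.log_le_log (by linarith) h₂⟩

section QuadraticMap

variable {𝕜 : Type*} [NormedDivisionRing 𝕜] {c w : 𝕜}

theorem norm_sq_sub_norm_le_norm_sq_add : ‖w‖ ^ 2 - ‖c‖ ≤ ‖w ^ 2 + c‖ := by
  have h := norm_sub_norm_le (w ^ 2) (-c)
  rwa [norm_pow, norm_neg, sub_neg_eq_add] at h

theorem norm_sq_add_le_norm_sq_add_norm : ‖w ^ 2 + c‖ ≤ ‖w‖ ^ 2 + ‖c‖ := by
  have h := norm_add_le (w ^ 2) c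
  rwa [norm_pow] at h

theorem norm_le_norm_sq_add (hw : ‖w‖ + ‖c‖ ≤ ‖w‖ ^ 2) : ‖w‖ ≤ ‖w ^ 2 + c‖ := by
  linarith [norm_sq_sub_norm_le_norm_sq_add (w := w) (c := c)]

theorem abs_log_norm_sq_add_sub_le (hw₀ : w ≠ 0) (hw : 2 * ‖c‖ ≤ ‖w‖ ^ 2) :
    |Real.log ‖w ^ 2 + c‖ - 2 * Real.log ‖w‖| ≤ Real.log 2 := by
  have hpos : 0 < ‖w‖ ^ 2 := by positivity
  have hlower := norm_sq_sub_norm_le_norm_sq_add (w := w) (c := c)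
  have hupper := norm_sq_add_le_norm_sq_add_norm (w := w) (c := c)
  have hne : ‖w ^ 2 + c‖ ≠ 0 := by linarith
  have hsq : 2 * Real.log ‖w‖ = Real.log (‖w‖ ^ 2) := by rw [Real.log_pow]; norm_num
  rw [hsq, ← Real.log_div hne hpos.ne']
  apply Real.abs_log_le_log_two
  · rw [le_div_iff₀ hpos]; linarith
  · rw [div_le_iff₀ hpos]; linarith

variable (c) in
theorem mapsTo_sq_add_escape :
    MapsTo (fun w : 𝕜 => w ^ 2 + c) {w | ‖c‖ + 3 ≤ ‖w‖} {w | ‖c‖ + 3 ≤ ‖w‖} := by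
  intro w (hw : ‖c‖ + 3 ≤ ‖w‖)
  exact hw.trans (norm_le_norm_sq_add (by nlinarith [norm_nonneg c]))

theorem exists_pos_tendsto_log_norm_iterate_div (hw : ‖c‖ + 3 ≤ ‖w‖) :
    ∃ G, 0 < G ∧
      Tendsto (fun n => Real.log ‖(fun w => w ^ 2 + c)^[n] w‖ / 2 ^ n) atTop (𝓝 G) := by
  have horbit n : ‖c‖ + 3 ≤ ‖(fun w => w ^ 2 + c)^[n] w‖ :=
    (mapsTo_sq_add_escape c).iterate n hw
  have hstep n : |Real.log ‖(fun w => w ^ 2 + c)^[n + 1] w‖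
      - 2 * Real.log ‖(fun w => w ^ 2 + c)^[n] w‖| ≤ Real.log 2 := by
    rw [Function.iterate_succ_apply']
    have hn := horbit n
    exact abs_log_norm_sq_add_sub_le (norm_pos_iff.mp (by linarith [norm_nonneg c]))
      (by nlinarith [norm_nonneg c])
  obtain ⟨G, hG, hG₀⟩ := exists_tendsto_div_two_pow_of_abs_sub_two_mul_le
    (u := fun n => Real.log ‖(fun w => w ^ 2 + c)^[n] w‖) hstep
  refine ⟨G, ?_, hG⟩
  have hlog : Real.log 2 < Real.log ‖w‖ :=
    Real.log_lt_log (by norm_num) (by linarith [norm_nonneg c])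
  rw [Function.iterate_zero_apply] at hG₀
  linarith [(abs_le.mp hG₀).2]

end QuadraticMap

theorem green_function_exists (c z : ℂ)
    (hz : Tendsto (fun n => ‖(fun w => w ^ 2 + c)^[n] z‖) atTop atTop) :
    ∃ G : ℝ, 0 < G ∧
      Tendsto (fun n : ℕ =>
        (1 / 2 ^ n : ℝ) * max (Real.log ‖(fun w => w ^ 2 + c)^[n] z‖) 0)
        atTop (nhds G) := by
  set f : ℂ → ℂ := fun w => w ^ 2 + c
  obtain ⟨N, hN⟩ := (hz.eventually_ge_atTop (‖c‖ + 3)).exists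
  obtain ⟨G, hG, hlim⟩ := exists_pos_tendsto_log_norm_iterate_div hN
  refine ⟨G / 2 ^ N, by positivity, ?_⟩
  simp only [one_div_mul_eq_div]
  refine tendsto_div_two_pow_of_tendsto_shift N (hlim.congr fun n => ?_)
  have hone : 1 ≤ ‖f^[n] (f^[N] z)‖ :=
    le_trans (by linarith [norm_nonneg c]) ((mapsTo_sq_add_escape c).iterate n hN)
  rw [Function.iterate_add_apply, max_eq_left (Real.log_nonneg hone)]
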